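/- arXiv:1909.02634 — 4 statements merged into one kernel-verified Lean document; each statement's English description precedes it below -/
import Mathlib

section
/- The join G + H of two nontrivial graphs G and H is quasi-λ-distance-balanced if and only if both G and H are empty graphs (i.e., G + H is a complete bipartite graph K_{m,n}) with m ≠ n, where m = |V(G)| and n = |V(H)|. -/
open SimpleGraph

/-- `wSet G u v` is the set of vertices strictly closer to `u` than to `v`. -/
def wSet {V : Type*} (G : SimpleGraph V) (u v : V) : Set V :=
  {x | G.dist x u < G.dist x v}

/-- `G` is quasi-`lam`-distance-balanced. -/
def QuasiDB {V : Type*} (G : SimpleGraph V) (lam : ℚ) : Prop :=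
  ∀ u v : V, G.Adj u v →
    ((wSet G u v).ncard : ℚ) = lam * ((wSet G v u).ncard : ℚ) ∨
    ((wSet G v u).ncard : ℚ) = lam * ((wSet G u v).ncard : ℚ)


/-- The join of graphs `G` and `H`: the disjoint union together with all
edges between the two vertex sets. -/
def graphJoin {α β : Type*} (G : SimpleGraph α) (H : SimpleGraph β) :
    SimpleGraph (α ⊕ β) where
  Adj x y :=
    match x, y with
    | .inl a, .inl b => G.Adj a b
    | .inr a, .inr b => H.Adj a b
    | .inl _, .inr _ => True
    | .inr _, .inl _ => True
  symm := by
    constructor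
    intro x y h
    cases x <;> cases y <;> simp_all [SimpleGraph.adj_comm]
  loopless := by
    constructor
    intro x
    cases x <;> simp


/-!
Quasi-`λ`-distance-balanced graphs (`λ > 1`) are triangle-free. Along an edge `uv` distances
change by at most one, so `|W_uv| - |W_vu| = ∑ₓ (d(x,v) - d(x,u))`, and these differences
telescope to zero around a triangle `uvw`. If the three ratios `λ^{±1}` all point the same way
around the triangle this contradicts positivity; otherwise the zero sum forces
`|W_xy| = |W_zy| + |W_xz|` for the edge pointing against the other two, while
`W_xy ⊊ W_zy ∪ W_xz`. An edge on one side of a join together with any vertex of the other side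
is a triangle, so both sides are empty and the join is `K_{m,n}`, whose edges all have ratio
`n / m`.
-/

lemma Set.ncard_insert_image_compl_singleton {γ δ : Type*} [Finite δ] {f : δ → γ}
    (hf : Function.Injective f) {x : γ} (hx : x ∉ Set.range f) (y : δ) :
    (insert x (f '' {y}ᶜ)).ncard = Nat.card δ := by
  have : 0 < Nat.card δ := Nat.card_pos_iff.mpr ⟨⟨y⟩, inferInstance⟩
  rw [Set.ncard_insert_of_notMem (fun h => hx (Set.image_subset_range _ _ h)),
    Set.ncard_image_of_injective _ hf, Set.ncard_compl, Set.ncard_singleton]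
  omega

namespace SimpleGraph

section QuasiDB

variable {V : Type*} {G : SimpleGraph V} {u v w : V}

lemma self_mem_wSet (h : G.Adj u v) : u ∈ wSet G u v := by
  simp [wSet, dist_eq_one_iff_adj.mpr h]

lemma ncard_wSet_pos [Finite V] (h : G.Adj u v) : 0 < (wSet G u v).ncard :=
  (Set.ncard_pos (Set.toFinite _)).mpr ⟨u, self_mem_wSet h⟩

lemma ncard_wSet_eq_sum [Fintype V] (u v : V) :
    ((wSet G u v).ncard : ℤ) = ∑ x, if G.dist x u < G.dist x v then 1 else 0 := by
  classical
  rw [wSet, Set.ncard_eq_toFinset_card', Set.toFinset_ofPred, Finset.card_filter]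
  push_cast
  rfl

lemma Adj.ncard_wSet_sub_ncard_wSet [Fintype V] (h : G.Adj u v) :
    ((wSet G u v).ncard : ℤ) - (wSet G v u).ncard =
      ∑ x, ((G.dist x v : ℤ) - G.dist x u) := by
  rw [ncard_wSet_eq_sum, ncard_wSet_eq_sum, ← Finset.sum_sub_distrib]
  refine Finset.sum_congr rfl fun x _ => ?_
  rcases h.diff_dist_adj (u := x) with e | e | e <;> split_ifs <;> omega

lemma ncard_wSet_add_ncard_wSet_add_ncard_wSet [Fintype V] (huv : G.Adj u v)
    (hvw : G.Adj v w) (hwu : G.Adj w u) :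
    (wSet G u v).ncard + (wSet G v w).ncard + (wSet G w u).ncard =
      (wSet G v u).ncard + (wSet G w v).ncard + (wSet G u w).ncard := by
  have huv' := huv.ncard_wSet_sub_ncard_wSet
  have hvw' := hvw.ncard_wSet_sub_ncard_wSet
  have hwu' := hwu.ncard_wSet_sub_ncard_wSet
  have htelescope : ∑ x, ((G.dist x v : ℤ) - G.dist x u) +
      ∑ x, ((G.dist x w : ℤ) - G.dist x v) + ∑ x, ((G.dist x u : ℤ) - G.dist x w) = 0 := by
    simp only [← Finset.sum_add_distrib]
    simp
  omega

lemma ncard_wSet_lt_add [Finite V] (huw : G.Adj u w) (hvw : G.Adj v w) :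
    (wSet G u v).ncard < (wSet G w v).ncard + (wSet G u w).ncard := by
  have hsub : wSet G u v ⊆ wSet G w v ∪ wSet G u w := fun x (hx : G.dist x u < G.dist x v) => by
    by_cases hw : G.dist x w < G.dist x v
    · exact Or.inl hw
    · exact Or.inr (show G.dist x u < G.dist x w by omega)
  have hw : w ∉ wSet G u v := by
    simp [wSet, dist_eq_one_iff_adj.mpr huw.symm, dist_eq_one_iff_adj.mpr hvw.symm]
  have hssub := (Set.ssubset_iff_of_subset hsub).mpr ⟨w, Or.inl (self_mem_wSet hvw.symm), hw⟩
  exact (Set.ncard_lt_ncard hssub).trans_le (Set.ncard_union_le _ _)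

theorem QuasiDB.cliqueFree_three [Fintype V] {lam : ℚ} (hlam : 1 < lam) (h : QuasiDB G lam) :
    G.CliqueFree 3 := by
  classical
  intro s hs
  obtain ⟨u, v, w, huv, huw, hvw, rfl⟩ := is3Clique_iff.mp hs
  have := ncard_wSet_add_ncard_wSet_add_ncard_wSet huv hvw huw.symm
  have := ncard_wSet_lt_add huw hvw
  have := ncard_wSet_lt_add hvw huw
  have := ncard_wSet_lt_add huv.symm huw.symm
  have := ncard_wSet_lt_add huw.symm huv.symm
  have := ncard_wSet_lt_add hvw.symm huv
  have := ncard_wSet_lt_add huv hvw.symm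
  have := ncard_wSet_pos huv
  have := ncard_wSet_pos huv.symm
  have := ncard_wSet_pos hvw
  have := ncard_wSet_pos hvw.symm
  have := ncard_wSet_pos huw
  have := ncard_wSet_pos huw.symm
  rcases h u v huv with e1 | e1 <;> rcases h v w hvw with e2 | e2 <;>
    rcases h w u huw.symm with e3 | e3 <;> qify at * <;> nlinarith

end QuasiDB

section Join

variable {α β : Type*} {G : SimpleGraph α} {H : SimpleGraph β}

lemma eq_bot_of_cliqueFree_three_graphJoin_left [Nonempty β]
    (h : (graphJoin G H).CliqueFree 3) : G = ⊥ := by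
  classical
  refine eq_bot_iff_forall_not_adj.mpr fun a b hab => ?_
  obtain ⟨d⟩ := ‹Nonempty β›
  have : (graphJoin G H).IsNClique 3 {.inl a, .inl b, .inr d} :=
    is3Clique_triple_iff.mpr ⟨hab, trivial, trivial⟩
  exact h _ this

lemma eq_bot_of_cliqueFree_three_graphJoin_right [Nonempty α]
    (h : (graphJoin G H).CliqueFree 3) : H = ⊥ := by
  classical
  refine eq_bot_iff_forall_not_adj.mpr fun a b hab => ?_
  obtain ⟨d⟩ := ‹Nonempty α›
  have : (graphJoin G H).IsNClique 3 {.inr a, .inr b, .inl d} :=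
    is3Clique_triple_iff.mpr ⟨hab, trivial, trivial⟩
  exact h _ this

lemma graphJoin_bot_bot :
    graphJoin (⊥ : SimpleGraph α) (⊥ : SimpleGraph β) = completeBipartiteGraph α β := by
  ext x y
  cases x <;> cases y <;> simp [graphJoin]

end Join

section CompleteBipartite

open Sum

variable {α β : Type*}

@[simp] lemma completeBipartiteGraph_dist_inl_inr (a : α) (b : β) :
    (completeBipartiteGraph α β).dist (inl a) (inr b) = 1 :=
  dist_eq_one_iff_adj.mpr (by simp)

@[simp] lemma completeBipartiteGraph_dist_inr_inl (a : α) (b : β) :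
    (completeBipartiteGraph α β).dist (inr b) (inl a) = 1 :=
  dist_eq_one_iff_adj.mpr (by simp)

lemma completeBipartiteGraph_one_lt_dist_inl_inl {a c : α} (b : β) (h : a ≠ c) :
    1 < (completeBipartiteGraph α β).dist (inl a) (inl c) := by
  have hab : (completeBipartiteGraph α β).Adj (inl a) (inr b) := by simp
  have hbc : (completeBipartiteGraph α β).Adj (inr b) (inl c) := by simp
  exact (hab.reachable.trans hbc.reachable).one_lt_dist_of_ne_of_not_adj (by simpa) (by simp)

lemma completeBipartiteGraph_one_lt_dist_inr_inr (a : α) {b d : β} (h : b ≠ d) :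
    1 < (completeBipartiteGraph α β).dist (inr b) (inr d) := by
  have hba : (completeBipartiteGraph α β).Adj (inr b) (inl a) := by simp
  have had : (completeBipartiteGraph α β).Adj (inl a) (inr d) := by simp
  exact (hba.reachable.trans had.reachable).one_lt_dist_of_ne_of_not_adj (by simpa) (by simp)

lemma wSet_completeBipartiteGraph_inl_inr (a : α) (b : β) :
    wSet (completeBipartiteGraph α β) (inl a) (inr b) = insert (inl a) (inr '' {b}ᶜ) := by
  ext x
  rcases x with c | e
  · by_cases hc : c = a
    · simp [wSet, hc]
    · simp [wSet, hc, Nat.not_lt.mpr (completeBipartiteGraph_one_lt_dist_inl_inl b hc).le]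
  · by_cases he : e = b
    · simp [wSet, he]
    · simpa [wSet, he] using completeBipartiteGraph_one_lt_dist_inr_inr a he

lemma wSet_completeBipartiteGraph_inr_inl (a : α) (b : β) :
    wSet (completeBipartiteGraph α β) (inr b) (inl a) = insert (inr b) (inl '' {a}ᶜ) := by
  ext x
  rcases x with c | e
  · by_cases hc : c = a
    · simp [wSet, hc]
    · simpa [wSet, hc] using completeBipartiteGraph_one_lt_dist_inl_inl b hc
  · by_cases he : e = b
    · simp [wSet, he]
    · simp [wSet, he, Nat.not_lt.mpr (completeBipartiteGraph_one_lt_dist_inr_inr a he).le]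

lemma ncard_wSet_completeBipartiteGraph_inl_inr [Finite β] (a : α) (b : β) :
    (wSet (completeBipartiteGraph α β) (inl a) (inr b)).ncard = Nat.card β := by
  rw [wSet_completeBipartiteGraph_inl_inr]
  exact Set.ncard_insert_image_compl_singleton inr_injective (by simp) b

lemma ncard_wSet_completeBipartiteGraph_inr_inl [Finite α] (a : α) (b : β) :
    (wSet (completeBipartiteGraph α β) (inr b) (inl a)).ncard = Nat.card α := by
  rw [wSet_completeBipartiteGraph_inr_inl]
  exact Set.ncard_insert_image_compl_singleton inl_injective (by simp) a

lemma quasiDB_completeBipartiteGraph_iff [Finite α] [Finite β] [Nonempty α] [Nonempty β]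
    {lam : ℚ} : QuasiDB (completeBipartiteGraph α β) lam ↔
      (Nat.card β : ℚ) = lam * Nat.card α ∨ (Nat.card α : ℚ) = lam * Nat.card β := by
  obtain ⟨a⟩ := ‹Nonempty α›
  obtain ⟨b⟩ := ‹Nonempty β›
  refine ⟨fun h => ?_, fun h => ?_⟩
  · simpa [ncard_wSet_completeBipartiteGraph_inl_inr, ncard_wSet_completeBipartiteGraph_inr_inl]
      using h (inl a) (inr b) (by simp)
  · rintro (a | b) (c | d) hadj <;>
      simp_all [ncard_wSet_completeBipartiteGraph_inl_inr,
        ncard_wSet_completeBipartiteGraph_inr_inl, or_comm]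

theorem exists_quasiDB_completeBipartiteGraph_iff [Finite α] [Finite β] [Nonempty α]
    [Nonempty β] :
    (∃ lam : ℚ, 1 < lam ∧ QuasiDB (completeBipartiteGraph α β) lam) ↔
      Nat.card α ≠ Nat.card β := by
  simp_rw [quasiDB_completeBipartiteGraph_iff]
  have hα : (0 : ℚ) < Nat.card α := by exact_mod_cast Nat.card_pos
  have hβ : (0 : ℚ) < Nat.card β := by exact_mod_cast Nat.card_pos
  constructor
  · rintro ⟨lam, hlam, h⟩ hcard
    rw [hcard] at h
    rcases h with h | h <;> nlinarith
  · intro hcard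
    rcases Nat.lt_or_gt_of_ne hcard with hlt | hlt
    · refine ⟨Nat.card β / Nat.card α, ?_, Or.inl (div_mul_cancel₀ _ hα.ne').symm⟩
      rw [one_lt_div hα]
      exact_mod_cast hlt
    · refine ⟨Nat.card α / Nat.card β, ?_, Or.inr (div_mul_cancel₀ _ hβ.ne').symm⟩
      rw [one_lt_div hβ]
      exact_mod_cast hlt

end CompleteBipartite

end SimpleGraph

/-- The join of two nontrivial graphs is quasi-`lam`-distance-balanced (for some
`lam > 1`) iff both graphs are empty and their orders differ. -/
theorem stmt7 {α β : Type*} [Fintype α] [Fintype β] [Nontrivial α] [Nontrivial β]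
    (G : SimpleGraph α) (H : SimpleGraph β) :
    (∃ lam : ℚ, 1 < lam ∧ QuasiDB (graphJoin G H) lam) ↔
      (G = ⊥ ∧ H = ⊥ ∧ Fintype.card α ≠ Fintype.card β) := by
  rw [← Nat.card_eq_fintype_card, ← Nat.card_eq_fintype_card]
  constructor
  · rintro ⟨lam, hlam, h⟩
    have hK := h.cliqueFree_three hlam
    obtain rfl := eq_bot_of_cliqueFree_three_graphJoin_left hK
    obtain rfl := eq_bot_of_cliqueFree_three_graphJoin_right hK
    rw [graphJoin_bot_bot] at h
    exact ⟨rfl, rfl, exists_quasiDB_completeBipartiteGraph_iff.mp ⟨lam, hlam, h⟩⟩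
  · rintro ⟨rfl, rfl, hcard⟩
    rw [graphJoin_bot_bot]
    exact exists_quasiDB_completeBipartiteGraph_iff.mpr hcard
end

section
/- The complete bipartite graph K_{m,n} with m ≠ n, m,n ≥ 1, is quasi-λ-distance-balanced with λ = max(m,n)/min(m,n). -/
open SimpleGraph

section aux

variable {m n : ℕ}

private lemma adjlr (a : Fin m) (b : Fin n) :
    (completeBipartiteGraph (Fin m) (Fin n)).Adj (Sum.inl a) (Sum.inr b) := by simp

private lemma distlr (a : Fin m) (b : Fin n) :
    (completeBipartiteGraph (Fin m) (Fin n)).dist (Sum.inl a) (Sum.inr b) = 1 :=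
  SimpleGraph.dist_eq_one_iff_adj.mpr (adjlr a b)

private lemma distrl (a : Fin m) (b : Fin n) :
    (completeBipartiteGraph (Fin m) (Fin n)).dist (Sum.inr b) (Sum.inl a) = 1 :=
  SimpleGraph.dist_eq_one_iff_adj.mpr (adjlr a b).symm

private lemma distll (hn : 1 ≤ n) {a a' : Fin m} (h : a ≠ a') :
    (completeBipartiteGraph (Fin m) (Fin n)).dist (Sum.inl a) (Sum.inl a') = 2 := by
  obtain ⟨b⟩ := Fin.pos_iff_nonempty.mp hn
  set G := completeBipartiteGraph (Fin m) (Fin n) with hG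
  have w : G.Walk (Sum.inl a) (Sum.inl a') :=
    (adjlr a b).toWalk.append (adjlr a' b).toWalk.reverse
  have h2 : G.dist (Sum.inl a) (Sum.inl a') ≤ 2 := by
    have := SimpleGraph.dist_le ((adjlr a b).toWalk.append (adjlr a' b).toWalk.reverse)
    simpa using this
  have h1 : G.dist (Sum.inl a) (Sum.inl a') ≠ 1 := fun hd => by
    have := SimpleGraph.dist_eq_one_iff_adj.mp hd
    simp [hG] at this
  have h0 : G.dist (Sum.inl a) (Sum.inl a') ≠ 0 := by
    have : G.Reachable (Sum.inl a) (Sum.inl a') := ⟨w⟩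
    have := this.pos_dist_of_ne (by simpa using h)
    omega
  omega

private lemma distrr (hm : 1 ≤ m) {b b' : Fin n} (h : b ≠ b') :
    (completeBipartiteGraph (Fin m) (Fin n)).dist (Sum.inr b) (Sum.inr b') = 2 := by
  obtain ⟨a⟩ := Fin.pos_iff_nonempty.mp hm
  set G := completeBipartiteGraph (Fin m) (Fin n) with hG
  have w : G.Walk (Sum.inr b) (Sum.inr b') :=
    ((adjlr a b).symm.toWalk.append (adjlr a b').toWalk)
  have h2 : G.dist (Sum.inr b) (Sum.inr b') ≤ 2 := by
    have := SimpleGraph.dist_le ((adjlr a b).symm.toWalk.append (adjlr a b').toWalk)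
    simpa using this
  have h1 : G.dist (Sum.inr b) (Sum.inr b') ≠ 1 := fun hd => by
    have := SimpleGraph.dist_eq_one_iff_adj.mp hd
    simp [hG] at this
  have h0 : G.dist (Sum.inr b) (Sum.inr b') ≠ 0 := by
    have : G.Reachable (Sum.inr b) (Sum.inr b') := ⟨w⟩
    have := this.pos_dist_of_ne (by simpa using h)
    omega
  omega

private lemma wSetlr (hm : 1 ≤ m) (hn : 1 ≤ n) (a : Fin m) (b : Fin n) :
    wSet (completeBipartiteGraph (Fin m) (Fin n)) (Sum.inl a) (Sum.inr b)
      = insert (Sum.inl a) (Sum.inr '' {b}ᶜ) := by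
  ext x
  rcases x with a' | b'
  · by_cases h : a' = a
    · subst h
      simp [wSet, SimpleGraph.dist_self, distlr]
    · simp only [wSet, Set.mem_setOf_eq, distll hn h, distlr]
      simp [h]
  · by_cases h : b' = b
    · subst h
      simp [wSet, SimpleGraph.dist_self, distrl]
    · simp only [wSet, Set.mem_setOf_eq, distrl, distrr hm h]
      simp [h]

private lemma wSetrl (hm : 1 ≤ m) (hn : 1 ≤ n) (a : Fin m) (b : Fin n) :
    wSet (completeBipartiteGraph (Fin m) (Fin n)) (Sum.inr b) (Sum.inl a)
      = insert (Sum.inr b) (Sum.inl '' {a}ᶜ) := by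
  ext x
  rcases x with a' | b'
  · by_cases h : a' = a
    · subst h
      simp [wSet, SimpleGraph.dist_self, distlr]
    · simp only [wSet, Set.mem_setOf_eq, distll hn h, distlr]
      simp [h]
  · by_cases h : b' = b
    · subst h
      simp [wSet, SimpleGraph.dist_self, distrl]
    · simp only [wSet, Set.mem_setOf_eq, distrl, distrr hm h]
      simp [h]

private lemma ncard_compl_singleton (b : Fin n) : ({b}ᶜ : Set (Fin n)).ncard = n - 1 := by
  have := Set.ncard_add_ncard_compl ({b} : Set (Fin n))
  simp [Nat.card_eq_fintype_card] at this
  omega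

private lemma ncardlr (hm : 1 ≤ m) (hn : 1 ≤ n) (a : Fin m) (b : Fin n) :
    (wSet (completeBipartiteGraph (Fin m) (Fin n)) (Sum.inl a) (Sum.inr b)).ncard = n := by
  rw [wSetlr hm hn a b, Set.ncard_insert_of_notMem (by simp),
    Set.ncard_image_of_injective _ Sum.inr_injective, ncard_compl_singleton]
  omega

private lemma ncardrl (hm : 1 ≤ m) (hn : 1 ≤ n) (a : Fin m) (b : Fin n) :
    (wSet (completeBipartiteGraph (Fin m) (Fin n)) (Sum.inr b) (Sum.inl a)).ncard = m := by
  rw [wSetrl hm hn a b, Set.ncard_insert_of_notMem (by simp),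
    Set.ncard_image_of_injective _ Sum.inl_injective, ncard_compl_singleton]
  omega

end aux

/-- The complete bipartite graph `K_{m,n}` with `m ≠ n`, `m, n ≥ 1` is
quasi-`lam`-distance-balanced with `lam = max m n / min m n`. -/
theorem stmt8 (m n : ℕ) (hm : 1 ≤ m) (hn : 1 ≤ n) (hmn : m ≠ n) :
    1 < ((max m n : ℚ) / (min m n : ℚ)) ∧
      QuasiDB (completeBipartiteGraph (Fin m) (Fin n))
        ((max m n : ℚ) / (min m n : ℚ)) := by
  have hkey : ((n : ℚ)) = ((max m n : ℚ) / (min m n : ℚ)) * m ∨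
      ((m : ℚ)) = ((max m n : ℚ) / (min m n : ℚ)) * n := by
    rcases lt_or_gt_of_ne hmn with h | h
    · left
      rw [max_eq_right (show (m:ℚ) ≤ n by exact_mod_cast h.le), min_eq_left (show (m:ℚ) ≤ n by exact_mod_cast h.le)]
      have hm0 : (m:ℚ) ≠ 0 := by positivity
      have hn0 : (n:ℚ) ≠ 0 := by positivity
      field_simp
    · right
      rw [max_eq_left (show (n:ℚ) ≤ m by exact_mod_cast h.le), min_eq_right (show (n:ℚ) ≤ m by exact_mod_cast h.le)]
      have hm0 : (m:ℚ) ≠ 0 := by positivity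
      have hn0 : (n:ℚ) ≠ 0 := by positivity
      field_simp
  constructor
  · rcases lt_or_gt_of_ne hmn with h | h
    · rw [max_eq_right (show (m:ℚ) ≤ n by exact_mod_cast h.le), min_eq_left (show (m:ℚ) ≤ n by exact_mod_cast h.le)]
      rw [one_lt_div (by exact_mod_cast hm)]
      exact_mod_cast h
    · rw [max_eq_left (show (n:ℚ) ≤ m by exact_mod_cast h.le), min_eq_right (show (n:ℚ) ≤ m by exact_mod_cast h.le)]
      rw [one_lt_div (by exact_mod_cast hn)]
      exact_mod_cast h
  · intro u v huv
    rcases u with a | b <;> rcases v with a' | b' <;> simp at huv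
    · rw [ncardlr hm hn a b', ncardrl hm hn a b']
      rcases hkey with h | h
      · exact Or.inl h
      · exact Or.inr h
    · rw [ncardlr hm hn a' b, ncardrl hm hn a' b]
      rcases hkey with h | h
      · exact Or.inr h
      · exact Or.inl h
end

section
/- Let G be a connected quasi-(λ,2)-distance-balanced graph with minimum degree δ(G) = 1. Then G is isomorphic to a complete graph with some pendant vertices attached, where no two pendant vertices share the same root (neighbor). -/
open SimpleGraph

/-- `wSetN G n u v` is the set of vertices strictly closer to `u` than to `v`
(used for pairs `u`, `v` at distance `n`). -/
def wSetN {V : Type*} (G : SimpleGraph V) (n : ℕ) (u v : V) : Set V :=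
  {x | G.dist x u < G.dist x v}

/-- `G` is quasi-`(lam, n)`-distance-balanced: for every pair of vertices at
distance `n`, either `|W_{u n v}| = lam * |W_{v n u}|` or vice versa. -/
def QuasiDBN {V : Type*} (G : SimpleGraph V) (lam : ℚ) (n : ℕ) : Prop :=
  ∀ u v : V, G.dist u v = n →
    ((wSetN G n u v).ncard : ℚ) = lam * ((wSetN G n v u).ncard : ℚ) ∨
    ((wSetN G n v u).ncard : ℚ) = lam * ((wSetN G n u v).ncard : ℚ)


section Helpers

variable {V : Type*} [Fintype V] [DecidableEq V] (G : SimpleGraph V)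

lemma exists_step (hconn : G.Connected) {y r : V} (h : 1 ≤ G.dist y r) :
    ∃ w, G.Adj y w ∧ G.dist w r + 1 = G.dist y r := by
  obtain ⟨p, hp⟩ := hconn.exists_walk_length_eq_dist y r
  cases p with
  | nil => rw [Walk.length_nil] at hp; omega
  | @cons _ w _ ha q =>
      refine ⟨w, ha, ?_⟩
      have h1 : G.dist w r ≤ q.length := G.dist_le q
      have h2 : (Walk.cons ha q).length = q.length + 1 := Walk.length_cons ha q
      have h3 : G.dist y r ≤ G.dist y w + G.dist w r := hconn.dist_triangle
      have h4 : G.dist y w = 1 := by rw [dist_eq_one_iff_adj]; exact ha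
      omega

lemma pendant_dist (hconn : G.Connected) {x r : V} (hadj : G.Adj x r)
    (hu : ∀ z, G.Adj x z → z = r) {y : V} (hy : y ≠ x) :
    G.dist y x = G.dist y r + 1 := by
  have hxy : 1 ≤ G.dist x y := by
    have h0 : G.dist x y ≠ 0 := by
      exact fun h => hy ((hconn.dist_eq_zero_iff).mp h).symm
    omega
  obtain ⟨w, hw, hwd⟩ := exists_step G hconn hxy
  have hwr : w = r := hu w hw
  subst hwr
  rw [SimpleGraph.dist_comm, ← hwd, SimpleGraph.dist_comm]

lemma singleton_wSet (hconn : G.Connected) {p t u : V} (hadj : G.Adj p t)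
    (hu : ∀ z, G.Adj p z → z = t) (hdist : G.dist p u = 2) :
    wSetN G 2 p u = {p} := by
  have hup : u ≠ p := by
    intro h; subst h; rw [SimpleGraph.dist_self] at hdist; omega
  have htu : G.dist t u ≤ 1 := by
    have h1 : G.dist u p = G.dist u t + 1 := pendant_dist G hconn hadj hu hup
    rw [SimpleGraph.dist_comm] at h1
    rw [SimpleGraph.dist_comm (u := t) (v := u)]
    omega
  ext y
  simp only [wSetN, Set.mem_setOf_eq, Set.mem_singleton_iff]
  constructor
  · intro h
    by_contra hne
    have h1 : G.dist y p = G.dist y t + 1 := pendant_dist G hconn hadj hu hne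
    have h3 : G.dist y u ≤ G.dist y t + G.dist t u := hconn.dist_triangle
    omega
  · rintro rfl
    rw [SimpleGraph.dist_self, hdist]; omega

lemma no_shared_root (hconn : G.Connected) {lam : ℚ} (hlam : 1 < lam)
    (hq : QuasiDBN G lam 2) {p q t : V} (hpq : p ≠ q)
    (hp : G.Adj p t) (hup : ∀ z, G.Adj p z → z = t)
    (hq' : G.Adj q t) (huq : ∀ z, G.Adj q z → z = t) : False := by
  have hqt : G.dist q t = 1 := by rw [dist_eq_one_iff_adj]; exact hq'
  have hd : G.dist p q = 2 := by
    have h1 : G.dist q p = G.dist q t + 1 := pendant_dist G hconn hp hup hpq.symm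
    rw [SimpleGraph.dist_comm]; omega
  have hd' : G.dist q p = 2 := by rw [SimpleGraph.dist_comm]; exact hd
  have e1 : wSetN G 2 p q = {p} := singleton_wSet G hconn hp hup hd
  have e2 : wSetN G 2 q p = {q} := singleton_wSet G hconn hq' huq hd'
  rcases hq p q hd with h | h <;>
  · rw [e1, e2] at h
    simp only [Set.ncard_singleton, Nat.cast_one, mul_one] at h
    exact absurd h.symm (ne_of_gt hlam)

lemma three_card (A B C : Set V) (hAB : Disjoint A B) (hAC : Disjoint A C)
    (hBC : Disjoint B C) : A.ncard + B.ncard + C.ncard ≤ Fintype.card V := by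
  have h1 : (A ∪ B ∪ C).ncard ≤ Fintype.card V := by
    have h := Set.ncard_le_ncard (Set.subset_univ (A ∪ B ∪ C)) (Set.toFinite _)
    rwa [Set.ncard_univ, Nat.card_eq_fintype_card] at h
  rwa [Set.ncard_union_eq (by exact Set.disjoint_union_left.mpr ⟨hAC, hBC⟩)
      (Set.toFinite _) (Set.toFinite _),
    Set.ncard_union_eq hAB (Set.toFinite _) (Set.toFinite _)] at h1

end Helpers

/-- A connected quasi-`(lam, 2)`-distance-balanced graph with minimum degree `1`
is a complete graph together with some pendant vertices, no two of which share
the same root. -/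
theorem stmt17 {V : Type*} [Fintype V] [DecidableEq V] (G : SimpleGraph V)
    [DecidableRel G.Adj] (hconn : G.Connected)
    (lam : ℚ) (hlam : 1 < lam) (hq : QuasiDBN G lam 2)
    (hmindeg : ∃ x : V, G.degree x = 1) :
    ∃ s : Set V, G.IsClique s ∧
      (∀ v ∉ s, G.degree v = 1) ∧
      (∀ v ∉ s, ∀ u : V, G.Adj v u → u ∈ s) ∧
      (∀ v ∉ s, ∀ w ∉ s, v ≠ w → ∀ u : V, G.Adj v u → ¬ G.Adj w u) := by
  classical
  obtain ⟨x, hx⟩ := hmindeg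
  obtain ⟨r, hr⟩ := Finset.card_eq_one.mp hx
  have hadj : G.Adj x r := by
    rw [← mem_neighborFinset, hr]; exact Finset.mem_singleton_self r
  have hu : ∀ z, G.Adj x z → z = r := by
    intro z hz
    have := (mem_neighborFinset G x z).mpr hz
    rw [hr] at this; simpa using this
  have hxr : x ≠ r := G.ne_of_adj hadj
  have hdrx : G.dist r x = 1 := by
    rw [dist_eq_one_iff_adj]; exact hadj.symm
  by_cases hv0 : ∃ v, G.Adj r v ∧ v ≠ x
  case neg =>
    -- two-vertex case : V = {x, r}
    push_neg at hv0
    have hV : ∀ y : V, y = x ∨ y = r := by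
      intro y
      by_contra hy
      push_neg at hy
      obtain ⟨hy1, hy2⟩ := hy
      have h1 : 1 ≤ G.dist r y := by
        have h0 : G.dist r y ≠ 0 := fun h => hy2 ((hconn.dist_eq_zero_iff).mp h).symm
        omega
      obtain ⟨w, hw, hwd⟩ := exists_step G hconn h1
      have hwx : w = x := hv0 w hw
      rw [hwx] at hwd
      have h2 := pendant_dist G hconn hadj hu hy1
      rw [SimpleGraph.dist_comm (u := y) (v := x), SimpleGraph.dist_comm (u := y) (v := r)] at h2
      omega
    refine ⟨{r}, ?_, ?_, ?_, ?_⟩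
    · exact G.isClique_singleton r
    · intro v hv
      rcases hV v with rfl | rfl
      · exact hx
      · simp at hv
    · intro v hv u hvu
      have hvx : v = x := by
        rcases hV v with rfl | rfl
        · rfl
        · simp at hv
      subst hvx
      rw [hu u hvu]
      exact Set.mem_singleton r
    · intro v hv w hw hvw u hvu hwu
      have hvx : v = x := by
        rcases hV v with rfl | rfl
        · rfl
        · simp at hv
      have hwx : w = x := by
        rcases hV w with rfl | rfl
        · rfl
        · simp at hw
      exact hvw (hvx.trans hwx.symm)
  case pos =>
  obtain ⟨v₀, hv₀, hv₀x⟩ := hv0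
  -- distance from x to any non-x neighbor of r is 2
  have hdxv : ∀ v, G.Adj r v → v ≠ x → G.dist x v = 2 := by
    intro v hv hvx
    have h1 : G.dist v x = G.dist v r + 1 := pendant_dist G hconn hadj hu hvx
    have h2 : G.dist v r = 1 := by rw [dist_eq_one_iff_adj]; exact hv.symm
    rw [SimpleGraph.dist_comm]; omega
  have hsing : ∀ v, G.Adj r v → v ≠ x → wSetN G 2 x v = {x} := fun v hv hvx =>
    singleton_wSet G hconn hadj hu (hdxv v hv hvx)
  have hAcard : ∀ v, G.Adj r v → v ≠ x → ((wSetN G 2 v x).ncard : ℚ) = lam := by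
    intro v hv hvx
    have hvmem : v ∈ wSetN G 2 v x := by
      show G.dist v v < G.dist v x
      rw [SimpleGraph.dist_self, SimpleGraph.dist_comm, hdxv v hv hvx]; omega
    have h1 : 1 ≤ (wSetN G 2 v x).ncard :=
      (Set.ncard_pos (Set.toFinite _)).mpr ⟨v, hvmem⟩
    rcases hq x v (hdxv v hv hvx) with h | h
    · exfalso
      rw [hsing v hv hvx] at h
      simp only [Set.ncard_singleton, Nat.cast_one] at h
      have h2 : (1 : ℚ) ≤ ((wSetN G 2 v x).ncard : ℚ) := by exact_mod_cast h1
      nlinarith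
    · rw [hsing v hv hvx] at h
      simpa using h
  set m := (wSetN G 2 v₀ x).ncard with hm_def
  have hlm : lam = (m : ℚ) := (hAcard v₀ hv₀ hv₀x).symm
  have hm2 : 2 ≤ m := by
    have h1 : (1 : ℚ) < (m : ℚ) := hlm ▸ hlam
    exact_mod_cast h1
  have hAm : ∀ v, G.Adj r v → v ≠ x → (wSetN G 2 v x).ncard = m := by
    intro v hv hvx
    have h := hAcard v hv hvx
    rw [hlm] at h
    exact_mod_cast h
  -- the key asymmetric lemma for cliqueness
  have key : ∀ a b : V, G.Adj r a → a ≠ x → G.Adj r b → b ≠ x → a ≠ b → ¬G.Adj a b →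
      ((wSetN G 2 a b).ncard : ℚ) = lam * ((wSetN G 2 b a).ncard : ℚ) → False := by
    intro a b ha hax hb hbx hne hnab hcase
    have hdab : G.dist a b = 2 := by
      have l1 : G.dist a b ≤ 2 := by
        have t1 : G.dist a b ≤ G.dist a r + G.dist r b := hconn.dist_triangle
        have t2 : G.dist a r = 1 := by rw [dist_eq_one_iff_adj]; exact ha.symm
        have t3 : G.dist r b = 1 := by rw [dist_eq_one_iff_adj]; exact hb
        omega
      have l2 : G.dist a b ≠ 0 := fun h => hne ((hconn.dist_eq_zero_iff).mp h)
      have l3 : G.dist a b ≠ 1 := fun h => hnab (dist_eq_one_iff_adj.mp h)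
      omega
    have hsub : wSetN G 2 a b ⊆ wSetN G 2 a x := by
      intro y hy
      have hy' : G.dist y a < G.dist y b := hy
      have hyx : y ≠ x := by
        intro h
        rw [h, hdxv a ha hax, hdxv b hb hbx] at hy'
        omega
      have h1 : G.dist y x = G.dist y r + 1 := pendant_dist G hconn hadj hu hyx
      have h2 : G.dist y b ≤ G.dist y r + 1 := by
        have t1 : G.dist y b ≤ G.dist y r + G.dist r b := hconn.dist_triangle
        have t3 : G.dist r b = 1 := by rw [dist_eq_one_iff_adj]; exact hb
        omega
      show G.dist y a < G.dist y x
      omega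
    have hle : (wSetN G 2 a b).ncard ≤ m := by
      calc (wSetN G 2 a b).ncard ≤ (wSetN G 2 a x).ncard :=
            Set.ncard_le_ncard hsub (Set.toFinite _)
        _ = m := hAm a ha hax
    have hmemb : b ∈ wSetN G 2 b a := by
      show G.dist b b < G.dist b a
      rw [SimpleGraph.dist_self, SimpleGraph.dist_comm, hdab]; omega
    have hge1 : 1 ≤ (wSetN G 2 b a).ncard :=
      (Set.ncard_pos (Set.toFinite _)).mpr ⟨b, hmemb⟩
    have hnat : (wSetN G 2 a b).ncard = m * (wSetN G 2 b a).ncard := by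
      rw [hlm] at hcase
      exact_mod_cast hcase
    have hba1 : (wSetN G 2 b a).ncard = 1 := by
      have h1 : m * (wSetN G 2 b a).ncard ≤ m * 1 := by
        rw [mul_one, ← hnat]; exact hle
      have h2 := Nat.le_of_mul_le_mul_left h1 (by omega : 0 < m)
      omega
    have hab_m : (wSetN G 2 a b).ncard = m := by rw [hnat, hba1, mul_one]
    have hAeq : wSetN G 2 a b = wSetN G 2 a x :=
      Set.eq_of_subset_of_ncard_le hsub (by rw [hab_m, hAm a ha hax]) (Set.toFinite _)
    have hbnb : ∃ u, G.Adj b u ∧ u ≠ r := by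
      by_contra h
      push_neg at h
      exact no_shared_root G hconn hlam hq (Ne.symm hbx) hadj hu hb.symm h
    obtain ⟨u, hbu, hur⟩ := hbnb
    have hub : u ≠ b := fun h => G.irrefl (h ▸ hbu)
    have hsingba : wSetN G 2 b a = {b} := by
      obtain ⟨c, hc⟩ := Set.ncard_eq_one.mp hba1
      rw [hc]
      rw [hc] at hmemb
      simp at hmemb
      rw [hmemb]
    have hdua : G.dist u a ≤ 1 := by
      have hnm : u ∉ wSetN G 2 b a := by rw [hsingba]; simpa using hub
      have : ¬ (G.dist u b < G.dist u a) := hnm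
      have hdub : G.dist u b = 1 := by rw [dist_eq_one_iff_adj]; exact hbu.symm
      omega
    have hux : u ≠ x := by
      intro h
      rw [h] at hbu
      have hbr : b = r := hu b hbu.symm
      rw [hbr] at hb
      exact G.irrefl hb
    have humem : u ∈ wSetN G 2 a x := by
      have h1 : G.dist u x = G.dist u r + 1 := pendant_dist G hconn hadj hu hux
      have h2 : 1 ≤ G.dist u r := by
        have h0 : G.dist u r ≠ 0 := fun h => hur ((hconn.dist_eq_zero_iff).mp h)
        omega
      show G.dist u a < G.dist u x
      omega
    rw [← hAeq] at humem
    have hlt : G.dist u a < G.dist u b := humem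
    have hdub : G.dist u b = 1 := by rw [dist_eq_one_iff_adj]; exact hbu.symm
    have hua : u = a := by
      have : G.dist u a = 0 := by omega
      exact (hconn.dist_eq_zero_iff).mp this
    exact hnab (hua ▸ hbu.symm)
  have hclique : ∀ v v', G.Adj r v → v ≠ x → G.Adj r v' → v' ≠ x → v ≠ v' → G.Adj v v' := by
    intro v v' hv hvx hv' hv'x hne
    by_contra hnadj
    have hd2 : G.dist v v' = 2 := by
      have l1 : G.dist v v' ≤ 2 := by
        have t1 : G.dist v v' ≤ G.dist v r + G.dist r v' := hconn.dist_triangle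
        have t2 : G.dist v r = 1 := by rw [dist_eq_one_iff_adj]; exact hv.symm
        have t3 : G.dist r v' = 1 := by rw [dist_eq_one_iff_adj]; exact hv'
        omega
      have l2 : G.dist v v' ≠ 0 := fun h => hne ((hconn.dist_eq_zero_iff).mp h)
      have l3 : G.dist v v' ≠ 1 := fun h => hnadj (dist_eq_one_iff_adj.mp h)
      omega
    rcases hq v v' hd2 with h | h
    · exact key v v' hv hvx hv' hv'x hne hnadj h
    · exact key v' v hv' hv'x hv hvx (Ne.symm hne) (fun hh => hnadj hh.symm) h
  -- every vertex other than x, r is at least as close to v₀ as to r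
  have claim1 : ∀ n : ℕ, ∀ y, G.dist y r = n → y ≠ x → y ≠ r → G.dist y v₀ ≤ G.dist y r := by
    intro n
    induction n using Nat.strong_induction_on with
    | _ n ih =>
      intro y hn hyx hyr
      have hn1 : 1 ≤ n := by
        rcases Nat.eq_zero_or_pos n with h | h
        · exfalso
          apply hyr
          apply (hconn.dist_eq_zero_iff).mp
          omega
        · exact h
      rcases eq_or_lt_of_le hn1 with h1 | h1
      · -- n = 1 : y is a neighbour of r
        have hry : G.Adj r y := by
          rw [← dist_eq_one_iff_adj, SimpleGraph.dist_comm]; omega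
        by_cases hyv : y = v₀
        · rw [hyv, SimpleGraph.dist_self]; omega
        · have := hclique y v₀ hry hyx hv₀ hv₀x hyv
          have hd : G.dist y v₀ = 1 := by rw [dist_eq_one_iff_adj]; exact this
          omega
      · -- n ≥ 2
        have hge : 1 ≤ G.dist y r := by omega
        obtain ⟨w, hyw, hwd⟩ := exists_step G hconn hge
        have hwr : w ≠ r := by
          intro h
          rw [h, SimpleGraph.dist_self] at hwd
          omega
        have hwx : w ≠ x := by
          intro h
          rw [h] at hyw
          exact hyr (hu y hyw.symm)
        have hih := ih (n - 1) (by omega) w (by omega) hwx hwr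
        have ht : G.dist y v₀ ≤ G.dist y w + G.dist w v₀ := hconn.dist_triangle
        have hyw1 : G.dist y w = 1 := by rw [dist_eq_one_iff_adj]; exact hyw
        omega
  have hNcard : m + 2 = Fintype.card V := by
    have hAc : wSetN G 2 v₀ x = ({r, x} : Set V)ᶜ := by
      ext y
      simp only [wSetN, Set.mem_setOf_eq, Set.mem_compl_iff, Set.mem_insert_iff,
        Set.mem_singleton_iff, not_or]
      constructor
      · intro h
        constructor
        · intro hyr
          rw [hyr, hdrx] at h
          have : G.dist r v₀ = 1 := by rw [dist_eq_one_iff_adj]; exact hv₀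
          omega
        · intro hyx
          rw [hyx] at h
          rw [SimpleGraph.dist_self] at h
          omega
      · rintro ⟨hyr, hyx⟩
        have h1 := claim1 (G.dist y r) y rfl hyx hyr
        have h2 : G.dist y x = G.dist y r + 1 := pendant_dist G hconn hadj hu hyx
        omega
    have hcompl := Set.ncard_add_ncard_compl ({r, x} : Set V) (Set.toFinite _) (Set.toFinite _)
    rw [Set.ncard_pair (Ne.symm hxr)] at hcompl
    rw [← hAc] at hcompl
    rw [← hm_def] at hcompl
    rw [Nat.card_eq_fintype_card] at hcompl
    omega
  -- analysis of a vertex at distance 2 from r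
  have hCB : ∀ w, G.dist w r = 2 → ∃ t, G.Adj w t ∧ G.Adj r t ∧ t ≠ x ∧
      (∀ y ∈ wSetN G 2 w r, y ≠ t) ∧
      (wSetN G 2 w r).ncard + 1 ≤ m ∧
      (wSetN G 2 r w).ncard = m * (wSetN G 2 w r).ncard := by
    intro w hw2
    have hwr : w ≠ r := by
      intro h; rw [h, SimpleGraph.dist_self] at hw2; omega
    have hwx : w ≠ x := by
      intro h; rw [h] at hw2
      rw [SimpleGraph.dist_comm] at hw2
      omega
    have hdwx : G.dist w x = 3 := by
      have := pendant_dist G hconn hadj hu hwx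
      omega
    obtain ⟨t, hwt, htd⟩ := exists_step G hconn (by omega : 1 ≤ G.dist w r)
    have htr1 : G.dist t r = 1 := by omega
    have hrt : G.Adj r t := by
      rw [← dist_eq_one_iff_adj, SimpleGraph.dist_comm]; exact htr1
    have htx : t ≠ x := by
      intro h
      rw [h] at hwt
      have := hu w hwt.symm
      exact hwr this
    have hdwt : G.dist w t = 1 := by rw [dist_eq_one_iff_adj]; exact hwt
    -- B := wSetN G 2 w r avoids t and embeds in the m-set of t
    have hBt : ∀ y ∈ wSetN G 2 w r, y ≠ t := by
      intro y hy hyt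
      have hy' : G.dist y w < G.dist y r := hy
      rw [hyt] at hy'
      rw [SimpleGraph.dist_comm (u := t) (v := w)] at hy'
      rw [hdwt, htr1] at hy'
      omega
    have hBsub : wSetN G 2 w r ⊆ wSetN G 2 t x := by
      intro y hy
      have hy' : G.dist y w < G.dist y r := hy
      have hyx : y ≠ x := by
        intro h
        rw [h, SimpleGraph.dist_comm (u := x) (v := w)] at hy'
        rw [hdwx] at hy'
        rw [SimpleGraph.dist_comm (u := x) (v := r)] at hy'
        omega
      have h1 : G.dist y x = G.dist y r + 1 := pendant_dist G hconn hadj hu hyx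
      have h2 : G.dist y t ≤ G.dist y w + G.dist w t := hconn.dist_triangle
      show G.dist y t < G.dist y x
      omega
    have hBcard : (wSetN G 2 w r).ncard + 1 ≤ m := by
      have hins : insert t (wSetN G 2 w r) ⊆ wSetN G 2 t x := by
        intro y hy
        rcases Set.mem_insert_iff.mp hy with h | hy'
        · show G.dist y t < G.dist y x
          rw [h]
          rw [SimpleGraph.dist_self]
          have h3 : G.dist x t = 2 := hdxv t hrt htx
          rw [SimpleGraph.dist_comm]
          omega
        · exact hBsub hy'
      have htnm : t ∉ wSetN G 2 w r := fun h => (hBt t h) rfl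
      have h1 : (insert t (wSetN G 2 w r)).ncard ≤ (wSetN G 2 t x).ncard :=
        Set.ncard_le_ncard hins (Set.toFinite _)
      rw [Set.ncard_insert_of_notMem htnm (Set.toFinite _)] at h1
      rw [hAm t hrt htx] at h1
      omega
    -- r and x are in C := wSetN G 2 r w
    have hrC : r ∈ wSetN G 2 r w := by
      show G.dist r r < G.dist r w
      rw [SimpleGraph.dist_self, SimpleGraph.dist_comm]
      omega
    have hxC : x ∈ wSetN G 2 r w := by
      show G.dist x r < G.dist x w
      have e1 : G.dist x w = 3 := by rw [SimpleGraph.dist_comm]; exact hdwx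
      have e2 : G.dist x r = 1 := by rw [SimpleGraph.dist_comm]; exact hdrx
      omega
    have hCcard : 2 ≤ (wSetN G 2 r w).ncard := by
      have hsub2 : ({r, x} : Set V) ⊆ wSetN G 2 r w := by
        intro y hy
        rcases Set.mem_insert_iff.mp hy with h | hy'
        · rw [h]; exact hrC
        · rw [Set.mem_singleton_iff.mp hy']; exact hxC
      have := Set.ncard_le_ncard hsub2 (Set.toFinite _)
      rwa [Set.ncard_pair (Ne.symm hxr)] at this
    have hwB : w ∈ wSetN G 2 w r := by
      show G.dist w w < G.dist w r
      rw [SimpleGraph.dist_self]; omega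
    have hB1 : 1 ≤ (wSetN G 2 w r).ncard :=
      (Set.ncard_pos (Set.toFinite _)).mpr ⟨w, hwB⟩
    rcases hq w r hw2 with h | h
    · exfalso
      rw [hlm] at h
      have hnat : (wSetN G 2 w r).ncard = m * (wSetN G 2 r w).ncard := by exact_mod_cast h
      have hmul : m * 2 ≤ m * (wSetN G 2 r w).ncard := Nat.mul_le_mul_left m hCcard
      omega
    · rw [hlm] at h
      have hnat : (wSetN G 2 r w).ncard = m * (wSetN G 2 w r).ncard := by exact_mod_cast h
      exact ⟨t, hwt, hrt, htx, hBt, hBcard, hnat⟩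
  -- disjointness facts
  have hdisjBC : ∀ w : V, Disjoint (wSetN G 2 w r) (wSetN G 2 r w) := by
    intro w
    rw [Set.disjoint_left]
    intro y hy1 hy2
    have h1 : G.dist y w < G.dist y r := hy1
    have h2 : G.dist y r < G.dist y w := hy2
    omega
  -- no vertex at distance ≥ 3 from r
  have hdle2 : ∀ y, G.dist y r ≤ 2 := by
    have hstep : ∀ n : ℕ, ∀ y, G.dist y r = n → n ≤ 2 := by
      intro n
      induction n using Nat.strong_induction_on with
      | _ n ih =>
        intro y hn
        by_contra hgt
        push_neg at hgt
        obtain ⟨w, hyw, hwd⟩ := exists_step G hconn (by omega : 1 ≤ G.dist y r)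
        have hw' : G.dist w r = n - 1 := by omega
        have hle2 := ih (n - 1) (by omega) w hw'
        have hn3 : n = 3 := by omega
        have hw2 : G.dist w r = 2 := by omega
        obtain ⟨t, hwt, hrt, htx, hBt, hBcard, hnat⟩ := hCB w hw2
        -- y and w are both in B
        have hyB : y ∈ wSetN G 2 w r := by
          show G.dist y w < G.dist y r
          have e1 : G.dist y w = 1 := by rw [dist_eq_one_iff_adj]; exact hyw
          omega
        have hwB : w ∈ wSetN G 2 w r := by
          show G.dist w w < G.dist w r
          rw [SimpleGraph.dist_self]; omega
        have hyw' : y ≠ w := G.ne_of_adj hyw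
        have hB2 : 2 ≤ (wSetN G 2 w r).ncard := by
          have hsub2 : ({y, w} : Set V) ⊆ wSetN G 2 w r := by
            intro z hz
            rcases Set.mem_insert_iff.mp hz with h | hz'
            · rw [h]; exact hyB
            · rw [Set.mem_singleton_iff.mp hz']; exact hwB
          have := Set.ncard_le_ncard hsub2 (Set.toFinite _)
          rwa [Set.ncard_pair hyw'] at this
        -- t is in neither B nor C
        have hdwt : G.dist t w = 1 := by
          rw [dist_eq_one_iff_adj]; exact hwt.symm
        have htr1 : G.dist t r = 1 := by rw [dist_eq_one_iff_adj]; exact hrt.symm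
        have htB : t ∉ wSetN G 2 w r := fun h => (hBt t h) rfl
        have htC : t ∉ wSetN G 2 r w := by
          intro h
          have hlt : G.dist t r < G.dist t w := h
          omega
        have hdisj1 : Disjoint (wSetN G 2 w r) ({t} : Set V) := by
          rw [Set.disjoint_singleton_right]; exact htB
        have hdisj2 : Disjoint (wSetN G 2 r w) ({t} : Set V) := by
          rw [Set.disjoint_singleton_right]; exact htC
        have hcount := three_card (wSetN G 2 w r) (wSetN G 2 r w) {t}
          (hdisjBC w) hdisj1 hdisj2
        rw [Set.ncard_singleton] at hcount
        have hmul : m * 2 ≤ m * (wSetN G 2 w r).ncard := Nat.mul_le_mul_left m hB2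
        omega
    intro y
    exact hstep (G.dist y r) y rfl
  -- vertices at distance 2 from r are pendant, with root adjacent to r
  have hpend : ∀ w, G.dist w r = 2 →
      (∀ u, G.Adj w u → G.Adj r u ∧ u ≠ x) ∧ (∀ u u', G.Adj w u → G.Adj w u' → u = u') := by
    intro w hw2
    obtain ⟨t, hwt, hrt, htx, hBt, hBcard, hnat⟩ := hCB w hw2
    have hwB : w ∈ wSetN G 2 w r := by
      show G.dist w w < G.dist w r
      rw [SimpleGraph.dist_self]; omega
    have hB1 : 1 ≤ (wSetN G 2 w r).ncard :=
      (Set.ncard_pos (Set.toFinite _)).mpr ⟨w, hwB⟩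
    have hnb : ∀ u, G.Adj w u → G.Adj r u ∧ u ≠ x := by
      intro u hwu
      have hur : u ≠ r := by
        intro h
        rw [h] at hwu
        have : G.dist w r = 1 := by rw [dist_eq_one_iff_adj]; exact hwu
        omega
      have hdu : G.dist u r ≤ 2 := hdle2 u
      have hdu1 : 1 ≤ G.dist u r := by
        have h0 : G.dist u r ≠ 0 := fun h => hur ((hconn.dist_eq_zero_iff).mp h)
        omega
      have hdu2 : G.dist u r ≠ 2 := by
        intro h2
        have huB : u ∈ wSetN G 2 w r := by
          show G.dist u w < G.dist u r
          have e1 : G.dist u w = 1 := by rw [dist_eq_one_iff_adj]; exact hwu.symm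
          omega
        have huw : u ≠ w := (G.ne_of_adj hwu).symm
        have hB2 : 2 ≤ (wSetN G 2 w r).ncard := by
          have hsub2 : ({u, w} : Set V) ⊆ wSetN G 2 w r := by
            intro z hz
            rcases Set.mem_insert_iff.mp hz with h | hz'
            · rw [h]; exact huB
            · rw [Set.mem_singleton_iff.mp hz']; exact hwB
          have := Set.ncard_le_ncard hsub2 (Set.toFinite _)
          rwa [Set.ncard_pair huw] at this
        have hdwt : G.dist t w = 1 := by rw [dist_eq_one_iff_adj]; exact hwt.symm
        have htr1 : G.dist t r = 1 := by rw [dist_eq_one_iff_adj]; exact hrt.symm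
        have htB : t ∉ wSetN G 2 w r := fun h => (hBt t h) rfl
        have htC : t ∉ wSetN G 2 r w := by
          intro h
          have hlt : G.dist t r < G.dist t w := h
          omega
        have hcount := three_card (wSetN G 2 w r) (wSetN G 2 r w) {t}
          (hdisjBC w) (by rw [Set.disjoint_singleton_right]; exact htB)
          (by rw [Set.disjoint_singleton_right]; exact htC)
        rw [Set.ncard_singleton] at hcount
        have hmul : m * 2 ≤ m * (wSetN G 2 w r).ncard := Nat.mul_le_mul_left m hB2
        omega
      have hru : G.Adj r u := by
        rw [← dist_eq_one_iff_adj, SimpleGraph.dist_comm]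
        omega
      have hux : u ≠ x := by
        intro h
        rw [h] at hwu
        have := hu w hwu.symm
        rw [this, SimpleGraph.dist_self] at hw2
        omega
      exact ⟨hru, hux⟩
    refine ⟨hnb, ?_⟩
    intro u u' hwu hwu'
    by_contra huu'
    have h1 : G.Adj r u := (hnb u hwu).1
    have h1' : G.Adj r u' := (hnb u' hwu').1
    have hnotB : ∀ z, G.Adj w z → G.Adj r z → z ∉ wSetN G 2 w r ∧ z ∉ wSetN G 2 r w := by
      intro z hwz hrz
      have e1 : G.dist z w = 1 := by rw [dist_eq_one_iff_adj]; exact hwz.symm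
      have e2 : G.dist z r = 1 := by rw [dist_eq_one_iff_adj]; exact hrz.symm
      constructor
      · intro h; have hlt : G.dist z w < G.dist z r := h; omega
      · intro h; have hlt : G.dist z r < G.dist z w := h; omega
    have hzu := hnotB u hwu h1
    have hzu' := hnotB u' hwu' h1'
    have hdisj1 : Disjoint (wSetN G 2 w r) ({u, u'} : Set V) := by
      rw [Set.disjoint_right]
      intro z hz
      rcases Set.mem_insert_iff.mp hz with h | hz'
      · rw [h]; exact hzu.1
      · rw [Set.mem_singleton_iff.mp hz']; exact hzu'.1
    have hdisj2 : Disjoint (wSetN G 2 r w) ({u, u'} : Set V) := by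
      rw [Set.disjoint_right]
      intro z hz
      rcases Set.mem_insert_iff.mp hz with h | hz'
      · rw [h]; exact hzu.2
      · rw [Set.mem_singleton_iff.mp hz']; exact hzu'.2
    have hcount := three_card (wSetN G 2 w r) (wSetN G 2 r w) {u, u'}
      (hdisjBC w) hdisj1 hdisj2
    rw [Set.ncard_pair huu'] at hcount
    have hmul : m * 1 ≤ m * (wSetN G 2 w r).ncard := Nat.mul_le_mul_left m hB1
    omega
  -- final assembly
  refine ⟨{y | y = r ∨ (G.Adj r y ∧ y ≠ x)}, ?_, ?_, ?_, ?_⟩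
  case _ =>
    rw [isClique_iff]
    intro a ha b hb hne
    simp only [Set.mem_setOf_eq] at ha hb
    rcases ha with rfl | ⟨ha1, ha2⟩
    · rcases hb with rfl | ⟨hb1, _⟩
      · exact absurd rfl hne
      · exact hb1
    · rcases hb with rfl | ⟨hb1, hb2⟩
      · exact ha1.symm
      · exact hclique a b ha1 ha2 hb1 hb2 hne
  all_goals {
    have hout : ∀ v : V, v ∉ {y | y = r ∨ (G.Adj r y ∧ y ≠ x)} → v = x ∨ G.dist v r = 2 := by
      intro v hv
      simp only [Set.mem_setOf_eq, not_or, not_and, not_not] at hv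
      obtain ⟨hv1, hv2⟩ := hv
      by_cases hvx : v = x
      · exact Or.inl hvx
      · right
        have hnadj : ¬ G.Adj r v := fun h => hvx (hv2 h)
        have h0 : G.dist v r ≠ 0 := fun h => hv1 ((hconn.dist_eq_zero_iff).mp h)
        have h1 : G.dist v r ≠ 1 := by
          intro h
          exact hnadj (dist_eq_one_iff_adj.mp h).symm
        have h2 := hdle2 v
        omega
    have huniq2 : ∀ v : V, v ∉ {y | y = r ∨ (G.Adj r y ∧ y ≠ x)} →
        ∃ t0, G.Adj v t0 ∧ ∀ z, G.Adj v z → z = t0 := by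
      intro v hv
      rcases hout v hv with hvx | hd2
      · exact hvx ▸ ⟨r, hadj, hu⟩
      · obtain ⟨t, hvt, -, -, -, -, -⟩ := hCB v hd2
        obtain ⟨-, hpu⟩ := hpend v hd2
        exact ⟨t, hvt, fun z hz => hpu z t hz hvt⟩
    first
    | -- degree condition
      (intro v hv
       obtain ⟨t0, hvt, hun⟩ := huniq2 v hv
       have hnf : G.neighborFinset v = {t0} := by
         apply Finset.eq_singleton_iff_unique_mem.mpr
         exact ⟨(mem_neighborFinset G v t0).mpr hvt,
                fun z hz => hun z ((mem_neighborFinset G v z).mp hz)⟩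
       rw [← card_neighborFinset_eq_degree, hnf, Finset.card_singleton])
    | -- neighbours of outside vertices are inside
      (intro v hv u hvu
       rcases hout v hv with hvx | hd2
       · have hur : u = r := hu u (hvx ▸ hvu)
         simp only [Set.mem_setOf_eq]
         exact Or.inl hur
       · obtain ⟨hnb, -⟩ := hpend v hd2
         obtain ⟨h1, h2⟩ := hnb u hvu
         simp only [Set.mem_setOf_eq]
         exact Or.inr ⟨h1, h2⟩)
    | -- two outside vertices have no common neighbour
      (intro v hv w hw hvw u hvu hwu
       obtain ⟨t0, hvt, hunv⟩ := huniq2 v hv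
       obtain ⟨t1, hwt, hunw⟩ := huniq2 w hw
       have huv : ∀ z, G.Adj v z → z = u := fun z hz => (hunv z hz).trans (hunv u hvu).symm
       have huw : ∀ z, G.Adj w z → z = u := fun z hz => (hunw z hz).trans (hunw u hwu).symm
       exact no_shared_root G hconn hlam hq hvw hvu huv hwu huw) }
end

section
/- In the graph G = K_n * K_d * K_m obtained from complete graphs K_n, K_d, K_m by joining every vertex of K_n to every vertex of K_d and every vertex of K_d to every vertex of K_m (with n > m ≥ 1, d ≥ 1), any x ∈ V(K_n) and y ∈ V(K_m) satisfy d(x,y) = 2, |W_{x 2 y}| = n, and |W_{y 2 x}| = m; hence G restricted to such pairs witnesses the quasi-(n/m, 2)-distance-balanced property. -/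
open SimpleGraph

/-- The layer (0, 1 or 2) of a vertex of `Fin n ⊕ Fin d ⊕ Fin m`. -/
def layer3 {n d m : ℕ} : Fin n ⊕ Fin d ⊕ Fin m → ℕ :=
  Sum.elim (fun _ => 0) (Sum.elim (fun _ => 1) (fun _ => 2))

/-- The graph `Kₙ * K_d * Kₘ`: three cliques of sizes `n`, `d`, `m` with every
vertex of the first clique joined to every vertex of the middle clique, and
every vertex of the middle clique joined to every vertex of the last clique. -/
def trijoin (n d m : ℕ) : SimpleGraph (Fin n ⊕ Fin d ⊕ Fin m) where
  Adj x y := x ≠ y ∧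
    (layer3 x = layer3 y ∨ layer3 x = layer3 y + 1 ∨ layer3 y = layer3 x + 1)
  symm := by
    constructor
    intro x y h
    exact ⟨h.1.symm, by tauto⟩
  loopless := by constructor; intro x h; exact h.1 rfl

/-!
A middle vertex is adjacent to both `x` and `y`, which are not adjacent, so `d(x,y) = 2`.
Every vertex of `Kₙ` is then at distance at most 1 from `x` and exactly 2 from `y`, every
vertex of `K_d` is adjacent to both, and symmetrically for `Kₘ`; hence `W_{x 2 y} = Kₙ`
and `W_{y 2 x} = Kₘ`.
-/

namespace trijoin

variable {n d m : ℕ}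

lemma adj_iff {a b : Fin n ⊕ Fin d ⊕ Fin m} :
    (trijoin n d m).Adj a b ↔ a ≠ b ∧ layer3 a ≤ layer3 b + 1 ∧ layer3 b ≤ layer3 a + 1 := by
  change _ ∧ _ ↔ _
  exact and_congr_right fun _ => by omega

lemma dist_le_one_of_layer3_eq {a b : Fin n ⊕ Fin d ⊕ Fin m} (h : layer3 a = layer3 b) :
    (trijoin n d m).dist a b ≤ 1 := by
  rcases eq_or_ne a b with rfl | hne
  · simp
  · exact (dist_eq_one_iff_adj.2 (adj_iff.2 ⟨hne, by omega, by omega⟩)).le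

lemma dist_middle (c : Fin d) {v : Fin n ⊕ Fin d ⊕ Fin m} (hv : .inr (.inl c) ≠ v) :
    (trijoin n d m).dist (.inr (.inl c)) v = 1 := by
  refine dist_eq_one_iff_adj.2 (adj_iff.2 ⟨hv, ?_⟩)
  rcases v with _ | _ | _ <;> simp [layer3]

lemma dist_inl_inr_inr (hd : 1 ≤ d) (a : Fin n) (b : Fin m) :
    (trijoin n d m).dist (.inl a) (.inr (.inr b)) = 2 := by
  let c : Fin n ⊕ Fin d ⊕ Fin m := .inr (.inl ⟨0, hd⟩)
  let p : (trijoin n d m).Walk (.inl a) (.inr (.inr b)) :=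
    .cons (v := c) (adj_iff.2 (by simp [c, layer3])) (.cons (adj_iff.2 (by simp [c, layer3])) .nil)
  have hnadj : ¬(trijoin n d m).Adj (.inl a) (.inr (.inr b)) := by simp [adj_iff, layer3]
  exact le_antisymm (dist_le p) (Reachable.one_lt_dist_of_ne_of_not_adj ⟨p⟩ (by simp) hnadj)

lemma dist_inr_inr_inl (hd : 1 ≤ d) (b : Fin m) (a : Fin n) :
    (trijoin n d m).dist (.inr (.inr b)) (.inl a) = 2 := by
  rw [SimpleGraph.dist_comm, dist_inl_inr_inr hd]

lemma wSetN_inl_inr_inr (hd : 1 ≤ d) (k : ℕ) (x : Fin n) (y : Fin m) :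
    wSetN (trijoin n d m) k (.inl x) (.inr (.inr y)) = Set.range Sum.inl := by
  ext (a | c | b)
  · have : (trijoin n d m).dist (.inl a) (.inl x) ≤ 1 := dist_le_one_of_layer3_eq rfl
    simp [wSetN, dist_inl_inr_inr hd]
    omega
  · simp [wSetN, dist_middle]
  · have : (trijoin n d m).dist (.inr (.inr b)) (.inr (.inr y)) ≤ 1 :=
      dist_le_one_of_layer3_eq rfl
    simp [wSetN, dist_inr_inr_inl hd]
    omega

lemma wSetN_inr_inr_inl (hd : 1 ≤ d) (k : ℕ) (y : Fin m) (x : Fin n) :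
    wSetN (trijoin n d m) k (.inr (.inr y)) (.inl x) = Set.range (Sum.inr ∘ Sum.inr) := by
  ext (a | c | b)
  · have : (trijoin n d m).dist (.inl a) (.inl x) ≤ 1 := dist_le_one_of_layer3_eq rfl
    simp [wSetN, dist_inl_inr_inr hd]
    omega
  · simp [wSetN, dist_middle]
  · have : (trijoin n d m).dist (.inr (.inr b)) (.inr (.inr y)) ≤ 1 :=
      dist_le_one_of_layer3_eq rfl
    simp [wSetN, dist_inr_inr_inl hd]
    omega

end trijoin

theorem stmt19_general (n d m : ℕ) (hm : 1 ≤ m) (hd : 1 ≤ d)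
    (x : Fin n) (y : Fin m) :
    (trijoin n d m).dist (.inl x) (.inr (.inr y)) = 2 ∧
    (wSetN (trijoin n d m) 2 (.inl x) (.inr (.inr y))).ncard = n ∧
    (wSetN (trijoin n d m) 2 (.inr (.inr y)) (.inl x)).ncard = m ∧
    ((wSetN (trijoin n d m) 2 (.inl x) (.inr (.inr y))).ncard : ℚ) =
      ((n : ℚ) / (m : ℚ)) *
        ((wSetN (trijoin n d m) 2 (.inr (.inr y)) (.inl x)).ncard : ℚ) := by
  have hx : (wSetN (trijoin n d m) 2 (.inl x) (.inr (.inr y))).ncard = n := by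
    rw [trijoin.wSetN_inl_inr_inr hd, Set.ncard_range_of_injective Sum.inl_injective,
      Nat.card_fin]
  have hy : (wSetN (trijoin n d m) 2 (.inr (.inr y)) (.inl x)).ncard = m := by
    rw [trijoin.wSetN_inr_inr_inl hd,
      Set.ncard_range_of_injective (Sum.inr_injective.comp Sum.inr_injective),
      Nat.card_fin]
  refine ⟨trijoin.dist_inl_inr_inr hd x y, hx, hy, ?_⟩
  rw [hx, hy, div_mul_cancel₀ _ (Nat.cast_ne_zero.2 (by omega))]

/-- In `G = Kₙ * K_d * Kₘ` with `n > m ≥ 1`, `d ≥ 1`, every `x ∈ Kₙ` and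
`y ∈ Kₘ` satisfy `d(x,y) = 2`, `|W_{x 2 y}| = n` and `|W_{y 2 x}| = m`, so such
pairs witness the quasi-`(n/m, 2)`-distance-balanced property. -/
theorem stmt19 (n d m : ℕ) (hm : 1 ≤ m) (hnm : m < n) (hd : 1 ≤ d)
    (x : Fin n) (y : Fin m) :
    (trijoin n d m).dist (.inl x) (.inr (.inr y)) = 2 ∧
    (wSetN (trijoin n d m) 2 (.inl x) (.inr (.inr y))).ncard = n ∧
    (wSetN (trijoin n d m) 2 (.inr (.inr y)) (.inl x)).ncard = m ∧
    ((wSetN (trijoin n d m) 2 (.inl x) (.inr (.inr y))).ncard : ℚ) =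
      ((n : ℚ) / (m : ℚ)) *
        ((wSetN (trijoin n d m) 2 (.inr (.inr y)) (.inl x)).ncard : ℚ) :=
  stmt19_general n d m hm hd x y
end
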